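/- In the NFA for the status field of a non-root-level QNode, every state has a directed path (possibly empty) to a state from which a 'begin new acquisition' edge originates (deadlock freedom at a non-root level). -/

import Mathlib

/-- States of the NFA for the status field of a non-root-level QNode. -/
inductive S : Type
  | R1 | R2 | R3 | W1 | W2 | W3 | W4 | W5
  | C1 | P1 | P2 | P3 | VP1 | V1 | A1
deriving DecidableEq

/-- Edges of the non-root-level status NFA; the Boolean flag marks
'begin acquisition' edges. -/
inductive E : S → S → Bool → Prop
  | a1 : E .R1 .W1 true
  | a2 : E .R1 .W2 true
  | a3 : E .A1 .W1 true
  | a4 : E .P2 .W5 true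
  | a5 : E .VP1 .W3 true
  | a6 : E .C1 .W4 true
  | e1 : E .W2 .C1 false
  | e2 : E .C1 .R1 false
  | e3 : E .C1 .P2 false
  | e4 : E .P2 .R1 false
  | e5 : E .W5 .P2 false
  | e6 : E .W5 .R3 false
  | e7 : E .W5 .R2 false
  | e8 : E .R3 .C1 false
  | e9 : E .W4 .C1 false
  | e10 : E .W1 .A1 false
  | e11 : E .A1 .VP1 false
  | e12 : E .VP1 .R1 false
  | e13 : E .VP1 .P2 false
  | e14 : E .W1 .V1 false
  | e15 : E .V1 .R1 false
  | e16 : E .V1 .P2 false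
  | e17 : E .W1 .P1 false
  | e18 : E .P1 .C1 false
  | e19 : E .W3 .P2 false
  | e20 : E .W3 .P3 false
  | e21 : E .P3 .P2 false
  | e22 : E .P3 .R3 false
  | e23 : E .P3 .R2 false
  | e24 : E .W3 .R3 false
  | e25 : E .W3 .R2 false
  | e26 : E .R2 .V1 false
  | e27 : E .R2 .P1 false
  | e28 : E .R2 .A1 false


/-- States from which a 'begin acquisition' edge originates. -/
def AcqSource (s : S) : Prop :=
  s = S.R1 ∨ s = S.A1 ∨ s = S.P2 ∨ s = S.VP1 ∨ s = S.C1

theorem acqSource_or_exists_edge_acqSource :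
    ∀ s : S, AcqSource s ∨ ∃ t, (∃ f, E s t f) ∧ AcqSource t
  | .R1 | .A1 | .P2 | .VP1 | .C1 => Or.inl (by simp [AcqSource])
  | .R2 | .W1 => Or.inr ⟨.A1, ⟨_, by constructor⟩, by simp [AcqSource]⟩
  | .R3 | .W2 | .W4 | .P1 => Or.inr ⟨.C1, ⟨_, by constructor⟩, by simp [AcqSource]⟩
  | .W3 | .W5 | .P3 | .V1 => Or.inr ⟨.P2, ⟨_, by constructor⟩, by simp [AcqSource]⟩

/-- Deadlock freedom at a non-root level: every state has a (possibly empty)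
directed path to a state from which a 'begin acquisition' edge originates. -/
theorem nonroot_status_deadlock_free :
    ∀ s : S, ∃ t : S,
      Relation.ReflTransGen (fun a b => ∃ f, E a b f) s t ∧ AcqSource t := by
  intro s
  rcases acqSource_or_exists_edge_acqSource s with hs | ⟨t, hst, ht⟩
  · exact ⟨s, .refl, hs⟩
  · exact ⟨t, .single hst, ht⟩
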